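/- arXiv:1707.01172 — 8 statements merged into one kernel-verified Lean document; each statement's English description precedes it below -/
import Mathlib

section
/- For weak compositions of length 2, the identity M_{(0,2)} = L_{(0,2)} + L_{(2,0)} − L_{(1,1)} holds, where M is the monomial slide polynomial and L the fundamental particle polynomial. In particular, the monomial slide basis does not expand positively in the fundamental particle basis. -/
/-! In two variables a fixed slide of `a` is either `a` itself or, when `a = (0, k)`, a split
`(i, j)` of `k` with `j > 0`. Hence `M_{(0,2)} = x^{(0,2)} + x^{(2,0)}` and
`L_{(0,2)} = x^{(0,2)} + x^{(1,1)}`, while `L_{(2,0)}` and `L_{(1,1)}` are single monomials;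
this gives the identity. If `M_{(0,2)} = ∑ c_b L_b`, then `x^{(0,2)}` occurs only in `L_{(0,2)}`
and `x^{(1,1)}` only in `L_{(0,2)}` and `L_{(1,1)}`, so comparing these two coefficients forces
`c_{(0,2)} = 1` and `c_{(1,1)} = -1`. -/

open MvPolynomial
open scoped Classical

noncomputable section

/-- Partial sum of the first `k` entries of a weak composition. -/
def psum {n : ℕ} (a : Fin n → ℕ) (k : ℕ) : ℕ :=
  ∑ i ∈ Finset.univ.filter (fun i : Fin n => (i : ℕ) < k), a i

/-- Dominance order: `Dom a b` means `b ≥ a`, i.e. every partial sum of `b`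
is at least the corresponding partial sum of `a`. -/
def Dom {n : ℕ} (a b : Fin n → ℕ) : Prop := ∀ k : ℕ, psum a k ≤ psum b k

/-- `flat a`: the list of nonzero entries of `a`, in order. -/
def flat {n : ℕ} (a : Fin n → ℕ) : List ℕ := (List.ofFn a).filter (· ≠ 0)

/-- The monomial `x^b`. -/
def mono {n : ℕ} (b : Fin n → ℕ) : MvPolynomial (Fin n) ℤ := ∏ i, X i ^ b i

/-- Finite set of weak compositions of length `n` with all entries `≤ N`. -/
def box (n N : ℕ) : Finset (Fin n → ℕ) := Fintype.piFinset fun _ => Finset.range (N + 1)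

/-- A single slide move relative to the base composition `a`: a local move
`(…,0,k,…) → (…,i,j,…)` with `i + j = k`.  When `fixed = true` we additionally
require `j > 0` whenever `k` occupies a position that is nonzero in `a`. -/
def SlideMove {n : ℕ} (a : Fin n → ℕ) (fixed : Bool) (b c : Fin n → ℕ) : Prop :=
  ∃ (p : ℕ) (hp : p + 1 < n) (i j : ℕ),
    b ⟨p, Nat.lt_of_succ_lt hp⟩ = 0 ∧
    i + j = b ⟨p + 1, hp⟩ ∧
    (fixed = true → a ⟨p + 1, hp⟩ ≠ 0 → 0 < j) ∧
    c = Function.update (Function.update b ⟨p, Nat.lt_of_succ_lt hp⟩ i) ⟨p + 1, hp⟩ j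

/-- `b` is a slide of `a`. -/
def Slides {n : ℕ} (a b : Fin n → ℕ) : Prop :=
  Relation.ReflTransGen (SlideMove a false) a b

/-- `b` is a fixed slide of `a`. -/
def FixSlides {n : ℕ} (a b : Fin n → ℕ) : Prop :=
  Relation.ReflTransGen (SlideMove a true) a b

/-- The monomial slide polynomial `M_a`. -/
def Mslide {n : ℕ} (a : Fin n → ℕ) : MvPolynomial (Fin n) ℤ :=
  ∑ b ∈ (box n (∑ i, a i)).filter (fun b => Dom a b ∧ flat b = flat a), mono b

/-- The fundamental slide polynomial `F_a`, as the generating function of slides. -/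
def Fslide {n : ℕ} (a : Fin n → ℕ) : MvPolynomial (Fin n) ℤ :=
  ∑ b ∈ (box n (∑ i, a i)).filter (fun b => Slides a b), mono b

/-- The fundamental particle polynomial `L_a`, the generating function of fixed slides. -/
def Lpart {n : ℕ} (a : Fin n → ℕ) : MvPolynomial (Fin n) ℤ :=
  ∑ b ∈ (box n (∑ i, a i)).filter (fun b => FixSlides a b), mono b

/-- A left swap: exchange entries `b i ≤ b j` with `i < j`. -/
def LSwap {n : ℕ} (b c : Fin n → ℕ) : Prop :=
  ∃ i j : Fin n, i < j ∧ b i ≤ b j ∧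
    c = Function.update (Function.update b i (b j)) j (b i)

section General

variable {n : ℕ}

lemma List.sum_filter_ne_zero {M : Type*} [AddMonoid M] [DecidableEq M] (l : List M) :
    (l.filter (· ≠ 0)).sum = l.sum := by
  induction l with
  | nil => rfl
  | cons x l ih => by_cases x = 0 <;> simp_all

lemma sum_eq_of_flat_eq {a b : Fin n → ℕ} (h : flat b = flat a) : ∑ i, b i = ∑ i, a i := by
  simpa only [flat, List.sum_filter_ne_zero, List.sum_ofFn] using congrArg List.sum h

lemma mem_box_of_sum_eq {N : ℕ} {b : Fin n → ℕ} (h : ∑ i, b i = N) : b ∈ box n N := by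
  simp only [box, Fintype.mem_piFinset, Finset.mem_range, Nat.lt_succ_iff, ← h]
  exact fun i => Finset.single_le_sum (fun j _ => Nat.zero_le (b j)) (Finset.mem_univ i)

lemma SlideMove.sum_eq {a b c : Fin n → ℕ} {f : Bool} (h : SlideMove a f b c) :
    ∑ i, c i = ∑ i, b i := by
  obtain ⟨p, hp, i, j, hb, hij, -, rfl⟩ := h
  set p' : Fin n := ⟨p, Nat.lt_of_succ_lt hp⟩
  set q : Fin n := ⟨p + 1, hp⟩
  have hqp : q ≠ p' := by simp [p', q]
  have hq_update := Finset.sum_update_of_mem (Finset.mem_univ q) (Function.update b p' i) j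
  have hq_split :=
    Finset.sum_eq_add_sum_sdiff_singleton_of_mem (Finset.mem_univ q) (Function.update b p' i)
  have hp_update := Finset.sum_update_of_mem (Finset.mem_univ p') b i
  have hp_split := Finset.sum_eq_add_sum_sdiff_singleton_of_mem (Finset.mem_univ p') b
  rw [Function.update_of_ne hqp] at hq_split
  omega

lemma FixSlides.sum_eq {a b : Fin n → ℕ} (h : FixSlides a b) : ∑ i, b i = ∑ i, a i := by
  induction h with
  | refl => rfl
  | tail _ hmove ih => exact hmove.sum_eq.trans ih

lemma mono_eq_monomial (b : Fin n → ℕ) :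
    mono b = monomial (Finsupp.equivFunOnFinite.symm b) 1 := by
  rw [monomial_eq, C_1, one_mul, Finsupp.prod_fintype _ _ fun i => pow_zero _]
  rfl

lemma coeff_mono (m b : Fin n → ℕ) :
    coeff (Finsupp.equivFunOnFinite.symm m) (mono b) = if b = m then 1 else 0 := by
  simp only [mono_eq_monomial, coeff_monomial, Equiv.apply_eq_iff_eq]

lemma Mslide_eq_sum {a : Fin n → ℕ} (s : Finset (Fin n → ℕ))
    (hs : ∀ b, Dom a b ∧ flat b = flat a ↔ b ∈ s) : Mslide a = ∑ b ∈ s, mono b := by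
  rw [Mslide]
  congr 1
  ext b
  rw [Finset.mem_filter, ← hs]
  exact and_iff_right_of_imp fun h => mem_box_of_sum_eq (sum_eq_of_flat_eq h.2)

lemma Lpart_eq_sum {a : Fin n → ℕ} (s : Finset (Fin n → ℕ))
    (hs : ∀ b, FixSlides a b ↔ b ∈ s) : Lpart a = ∑ b ∈ s, mono b := by
  rw [Lpart]
  congr 1
  ext b
  rw [Finset.mem_filter, ← hs]
  exact and_iff_right_of_imp fun h => mem_box_of_sum_eq h.sum_eq

lemma coeff_Lpart (a m : Fin n → ℕ) :
    coeff (Finsupp.equivFunOnFinite.symm m) (Lpart a) = if FixSlides a m then 1 else 0 := by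
  simp only [Lpart, coeff_sum, coeff_mono, Finset.sum_ite_eq', Finset.mem_filter]
  exact if_congr (and_iff_right_of_imp fun h => mem_box_of_sum_eq h.sum_eq) rfl rfl

lemma coeff_sum_smul_Lpart (c : (Fin n → ℕ) →₀ ℤ) (m : Fin n → ℕ)
    (s : Finset (Fin n → ℕ)) (hs : ∀ b, FixSlides b m ↔ b ∈ s) :
    coeff (Finsupp.equivFunOnFinite.symm m) (∑ b ∈ c.support, c b • Lpart b) =
      ∑ b ∈ s, c b := by
  simp only [coeff_sum, coeff_smul, coeff_Lpart, hs, smul_eq_mul, mul_ite, mul_one, mul_zero]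
  rw [← Finset.sum_filter, Finset.filter_mem_eq_inter]
  exact Finset.sum_subset Finset.inter_subset_right fun b hbs hb =>
    Finsupp.notMem_support_iff.mp fun hbc => hb (Finset.mem_inter.mpr ⟨hbc, hbs⟩)

end General

section TwoVariables

lemma slideMove_iff_of_two {a b c : Fin 2 → ℕ} {f : Bool} :
    SlideMove a f b c ↔ b 0 = 0 ∧ c 0 + c 1 = b 1 ∧ (f = true → a 1 ≠ 0 → 0 < c 1) := by
  constructor
  · rintro ⟨p, hp, i, j, hb, hij, hj, rfl⟩
    obtain rfl : p = 0 := by omega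
    simpa using ⟨hb, hij, hj⟩
  · rintro ⟨hb, hc, hf⟩
    refine ⟨0, one_lt_two, c 0, c 1, hb, hc, hf, ?_⟩
    ext x
    fin_cases x <;> simp

lemma fixSlides_iff_of_two {a b : Fin 2 → ℕ} :
    FixSlides a b ↔ b = a ∨ (a 0 = 0 ∧ b 0 + b 1 = a 1 ∧ 0 < b 1) := by
  constructor
  · intro h
    induction h with
    | refl => exact Or.inl rfl
    | @tail c d _ hmove ih =>
      obtain ⟨hc0, hd, hpos⟩ := slideMove_iff_of_two.mp hmove
      rcases ih with hca | ⟨ha, hc, hc1⟩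
      · rw [hca] at hc0 hd
        by_cases ha1 : a 1 = 0
        · exact Or.inl <| funext <| Fin.forall_fin_two.mpr ⟨by omega, by omega⟩
        · exact Or.inr ⟨hc0, hd, hpos rfl ha1⟩
      · exact Or.inr ⟨ha, by omega, hpos rfl (by omega)⟩
  · rintro (rfl | ⟨ha, hsum, hpos⟩)
    · exact .refl
    · exact .single (slideMove_iff_of_two.mpr ⟨ha, hsum, fun _ _ => hpos⟩)

lemma eq_of_add_eq_two {b : Fin 2 → ℕ} (h : b 0 + b 1 = 2) :
    b = ![0, 2] ∨ b = ![1, 1] ∨ b = ![2, 0] := by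
  simp only [funext_iff, Fin.forall_fin_two, Matrix.cons_val_zero, Matrix.cons_val_one,
    Matrix.cons_val_fin_one]
  omega

lemma fixSlides_zero_two_iff {b : Fin 2 → ℕ} :
    FixSlides ![0, 2] b ↔ b = ![0, 2] ∨ b = ![1, 1] := by
  simp only [fixSlides_iff_of_two, funext_iff, Fin.forall_fin_two, Matrix.cons_val_zero,
    Matrix.cons_val_one, Matrix.cons_val_fin_one, true_and]
  omega

lemma fixSlides_iff_of_head_ne_zero {a b : Fin 2 → ℕ} (ha : a 0 ≠ 0) :
    FixSlides a b ↔ b = a := by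
  simp [fixSlides_iff_of_two, ha]

lemma fixSlides_to_zero_two_iff {b : Fin 2 → ℕ} : FixSlides b ![0, 2] ↔ b = ![0, 2] := by
  simp only [fixSlides_iff_of_two, funext_iff, Fin.forall_fin_two, Matrix.cons_val_zero,
    Matrix.cons_val_one, Matrix.cons_val_fin_one]
  omega

lemma fixSlides_to_one_one_iff {b : Fin 2 → ℕ} :
    FixSlides b ![1, 1] ↔ b = ![1, 1] ∨ b = ![0, 2] := by
  simp only [fixSlides_iff_of_two, funext_iff, Fin.forall_fin_two, Matrix.cons_val_zero,
    Matrix.cons_val_one, Matrix.cons_val_fin_one]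
  omega

lemma dom_zero_two_two_zero : Dom ![0, 2] ![2, 0] := by
  rintro (_ | _ | k) <;> simp [_root_.psum, Finset.sum_filter, Fin.sum_univ_two]

lemma Mslide_zero_two : Mslide ![0, 2] = mono ![0, 2] + mono ![2, 0] := by
  rw [Mslide_eq_sum {![0, 2], ![2, 0]} fun b => ?_, Finset.sum_pair (by decide)]
  constructor
  · rintro ⟨-, hflat⟩
    have hsum := sum_eq_of_flat_eq hflat
    rw [Fin.sum_univ_two, Fin.sum_univ_two] at hsum
    rcases eq_of_add_eq_two hsum with rfl | rfl | rfl
    · simp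
    · exact absurd hflat (by decide)
    · simp
  · simp only [Finset.mem_insert, Finset.mem_singleton]
    rintro (rfl | rfl)
    · exact ⟨fun _ => le_rfl, rfl⟩
    · exact ⟨dom_zero_two_two_zero, by decide⟩

lemma Lpart_zero_two : Lpart ![0, 2] = mono ![0, 2] + mono ![1, 1] := by
  rw [Lpart_eq_sum {![0, 2], ![1, 1]} fun b => by simp [fixSlides_zero_two_iff],
    Finset.sum_pair (by decide)]

lemma Lpart_eq_mono_of_head_ne_zero {a : Fin 2 → ℕ} (ha : a 0 ≠ 0) : Lpart a = mono a := by
  rw [Lpart_eq_sum {a} fun b => by simp [fixSlides_iff_of_head_ne_zero ha],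
    Finset.sum_singleton]

end TwoVariables

/-- in `ℤ[x₁,x₂]` we have `M_{(0,2)} = L_{(0,2)} + L_{(2,0)} - L_{(1,1)}`;
in particular, any expansion of `M_{(0,2)}` in the fundamental particle basis has a
negative coefficient. -/
theorem Mslide_not_particle_positive :
    Mslide ![0, 2] = Lpart ![0, 2] + Lpart ![2, 0] - Lpart ![1, 1] ∧
    ∀ c : (Fin 2 → ℕ) →₀ ℤ,
      Mslide ![0, 2] = ∑ b ∈ c.support, c b • Lpart b → ∃ b, c b < 0 := by
  refine ⟨?_, fun c hc => ⟨![1, 1], ?_⟩⟩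
  · rw [Mslide_zero_two, Lpart_zero_two, Lpart_eq_mono_of_head_ne_zero (by decide),
      Lpart_eq_mono_of_head_ne_zero (a := ![1, 1]) (by decide)]
    ring
  have h02 : 1 = c ![0, 2] := by
    have h := congrArg (coeff (Finsupp.equivFunOnFinite.symm ![0, 2])) hc
    rw [coeff_sum_smul_Lpart c ![0, 2] {![0, 2]} fun b => by simp [fixSlides_to_zero_two_iff]] at h
    simpa [Mslide_zero_two, coeff_mono] using h
  have h11 : 0 = c ![1, 1] + c ![0, 2] := by
    have h := congrArg (coeff (Finsupp.equivFunOnFinite.symm ![1, 1])) hc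
    rw [coeff_sum_smul_Lpart c ![1, 1] {![1, 1], ![0, 2]}
      fun b => by simp [fixSlides_to_one_one_iff]] at h
    simpa [Mslide_zero_two, coeff_mono] using h
  omega

end
end

section
/- If b is a fixed slide of a and b ≠ a, then b > a strictly in dominance order; in particular x^a is the unique dominance-minimal monomial of the fundamental particle polynomial L_a. -/
open MvPolynomial
open scoped Classical

noncomputable section

lemma psum_update_lt {n : ℕ} (f : Fin n → ℕ) (t : Fin n) (v k : ℕ) (h : (t : ℕ) < k) :
    psum (Function.update f t v) k + f t = psum f k + v := by
  unfold _root_.psum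
  have ht : t ∈ Finset.univ.filter (fun i : Fin n => (i : ℕ) < k) := by
    simp [h]
  rw [Finset.sum_update_of_mem ht, Finset.sum_eq_sum_sdiff_singleton_add ht f]
  omega

lemma psum_update_ge {n : ℕ} (f : Fin n → ℕ) (t : Fin n) (v k : ℕ) (h : ¬ (t : ℕ) < k) :
    psum (Function.update f t v) k = psum f k := by
  unfold _root_.psum
  refine Finset.sum_congr rfl fun i hi => ?_
  simp only [Finset.mem_filter] at hi
  rw [Function.update_of_ne]
  rintro rfl; exact h hi.2

lemma slideMove_dom {n : ℕ} (a : Fin n → ℕ) (fx : Bool) (b c : Fin n → ℕ)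
    (h : SlideMove a fx b c) : Dom b c := by
  obtain ⟨p, hp, i, j, hb0, hij, -, rfl⟩ := h
  intro k
  by_cases h1 : p + 1 < k
  · have e1 := psum_update_lt (Function.update b ⟨p, Nat.lt_of_succ_lt hp⟩ i) ⟨p + 1, hp⟩ j k h1
    have e2 := psum_update_lt b ⟨p, Nat.lt_of_succ_lt hp⟩ i k (Nat.lt_of_succ_lt h1)
    have e3 : Function.update b ⟨p, Nat.lt_of_succ_lt hp⟩ i ⟨p + 1, hp⟩ = b ⟨p + 1, hp⟩ := by
      rw [Function.update_of_ne]
      simp [Fin.ext_iff]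
    rw [e3] at e1
    omega
  · by_cases h2 : p < k
    · have e1 := psum_update_ge (Function.update b ⟨p, Nat.lt_of_succ_lt hp⟩ i) ⟨p + 1, hp⟩ j k h1
      have e2 := psum_update_lt b ⟨p, Nat.lt_of_succ_lt hp⟩ i k h2
      omega
    · rw [psum_update_ge _ _ _ _ h1, psum_update_ge _ _ _ _ (by simpa using h2)]

lemma psum_succ {n : ℕ} (f : Fin n → ℕ) (m : ℕ) (hm : m < n) :
    psum f (m + 1) = psum f m + f ⟨m, hm⟩ := by
  unfold _root_.psum
  have hset : Finset.univ.filter (fun i : Fin n => (i : ℕ) < m + 1)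
      = insert ⟨m, hm⟩ (Finset.univ.filter (fun i : Fin n => (i : ℕ) < m)) := by
    ext i
    simp [Fin.ext_iff]
    omega
  rw [hset, Finset.sum_insert (by simp)]
  omega

/-- every fixed slide `b` of `a` satisfies `b ≥ a` in dominance
order, and strictly so when `b ≠ a`; hence `x^a` is the unique dominance-minimal
monomial of `L_a`. -/
theorem fixSlide_strictly_dominates {n : ℕ} (a b : Fin n → ℕ) (h : FixSlides a b) :
    Dom a b ∧ (b ≠ a → ¬ Dom b a) := by
  have hdom : Dom a b := by
    induction h with
    | refl => exact fun k => le_refl _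
    | tail _ hstep ih => exact fun k => le_trans (ih k) (slideMove_dom _ _ _ _ hstep k)
  refine ⟨hdom, fun hne hba => hne ?_⟩
  have e : ∀ k, psum a k = psum b k := fun k => le_antisymm (hdom k) (hba k)
  funext t
  have h1 := psum_succ a (t : ℕ) t.isLt
  have h2 := psum_succ b (t : ℕ) t.isLt
  have e1 := e (t : ℕ)
  have e2 := e ((t : ℕ) + 1)
  simp only [Fin.eta] at h1 h2
  omega

end
end

section
/- The fundamental particle polynomials {L_a}, indexed by weak compositions a of length n, form a basis of the polynomial ring ℤ[x_1,...,x_n]: they are linearly independent and span. -/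
open MvPolynomial
open scoped Classical

noncomputable section

namespace LpartAux

lemma psum_succ {n : ℕ} (a : Fin n → ℕ) (k : ℕ) (h : k < n) :
    psum a (k + 1) = psum a k + a ⟨k, h⟩ := by
  unfold _root_.psum
  rw [show (Finset.univ.filter (fun i : Fin n => (i : ℕ) < k + 1)) =
      insert ⟨k, h⟩ (Finset.univ.filter (fun i : Fin n => (i : ℕ) < k)) by
    ext x; simp [Finset.mem_filter, Fin.ext_iff]; omega]
  rw [Finset.sum_insert (by simp)]
  ring

lemma psum_of_ge {n : ℕ} (a : Fin n → ℕ) (k : ℕ) (h : n ≤ k) :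
    psum a k = ∑ i, a i := by
  unfold _root_.psum
  congr 1
  ext x
  simp only [Finset.mem_filter, Finset.mem_univ, true_and, iff_true]
  exact lt_of_lt_of_le x.isLt h

lemma eq_of_psum_eq {n : ℕ} {a b : Fin n → ℕ}
    (h : ∀ k ≤ n, psum a k = psum b k) : a = b := by
  funext i
  have h1 := h i (le_of_lt i.isLt)
  have h2 := h (i + 1) i.isLt
  rw [psum_succ a i i.isLt, psum_succ b i i.isLt, h1] at h2
  exact Nat.add_left_cancel h2

lemma dom_strict {n : ℕ} {a b : Fin n → ℕ} (hd : Dom a b) (hne : a ≠ b) :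
    ∃ k ≤ n, psum a k < psum b k := by
  by_contra hc
  push_neg at hc
  exact hne (eq_of_psum_eq fun k hk => le_antisymm (hd k) (hc k hk))

/-- the measure -/
def mu {n : ℕ} (a : Fin n → ℕ) : ℕ := ∑ k ∈ Finset.range (n + 1), psum a k

lemma mu_lt {n : ℕ} {a b : Fin n → ℕ} (hd : Dom a b) (hne : a ≠ b) :
    mu a < mu b := by
  obtain ⟨k, hk, hlt⟩ := dom_strict hd hne
  exact Finset.sum_lt_sum (fun i _ => hd i)
    ⟨k, Finset.mem_range.mpr (Nat.lt_succ_of_le hk), hlt⟩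

lemma mu_le {n : ℕ} (a : Fin n → ℕ) : mu a ≤ (n + 1) * ∑ i, a i := by
  calc mu a ≤ ∑ _k ∈ Finset.range (n + 1), ∑ i, a i := by
        refine Finset.sum_le_sum fun k _ => ?_
        unfold _root_.psum
        exact Finset.sum_le_sum_of_subset (Finset.filter_subset _ _)
    _ = (n + 1) * ∑ i, a i := by
        rw [Finset.sum_const, Finset.card_range, smul_eq_mul]

lemma slide_psum {n : ℕ} {a b c : Fin n → ℕ} {f : Bool} (h : SlideMove a f b c) :
    Dom b c ∧ (∑ x, c x = ∑ x, b x) := by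
  obtain ⟨p, hp, i, j, hb0, hij, -, hc⟩ := h
  subst hc
  set P : Fin n := ⟨p, Nat.lt_of_succ_lt hp⟩ with hP
  set Q : Fin n := ⟨p + 1, hp⟩ with hQ
  have hPQ : P ≠ Q := by simp [hP, hQ, Fin.ext_iff]
  set c : Fin n → ℕ := Function.update (Function.update b P i) Q j with hcdef
  have hcP : c P = i := by
    rw [hcdef, Function.update_of_ne hPQ, Function.update_self]
  have hcQ : c Q = j := by rw [hcdef, Function.update_self]
  have hcx : ∀ x : Fin n, x ≠ P → x ≠ Q → c x = b x := by
    intro x h1 h2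
    rw [hcdef, Function.update_of_ne h2, Function.update_of_ne h1]
  have key : ∀ k : ℕ, psum b k ≤ psum c k ∧ (k ≤ p ∨ p + 1 < k → psum c k = psum b k) := by
    intro k
    set S := Finset.univ.filter (fun x : Fin n => (x : ℕ) < k) with hS
    have hmem : ∀ x : Fin n, x ∈ S ↔ (x : ℕ) < k := by
      intro x; simp [hS]
    rcases Nat.lt_or_ge p k with hpk | hpk
    · rcases Nat.lt_or_ge (p+1) k with hqk | hqk
      · -- both in S
        have hPS : P ∈ S := (hmem P).mpr (by simpa [hP] using Nat.lt_of_succ_lt hqk)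
        have hQS : Q ∈ S := (hmem Q).mpr (by simpa [hQ] using hqk)
        have hQS' : Q ∈ S.erase P := Finset.mem_erase.mpr ⟨hPQ.symm, hQS⟩
        have hrest : ∀ g : Fin n → ℕ, ∑ x ∈ S, g x
            = g P + (g Q + ∑ x ∈ (S.erase P).erase Q, g x) := by
          intro g
          rw [Finset.add_sum_erase _ g hQS', Finset.add_sum_erase _ g hPS]
        have hre : ∑ x ∈ (S.erase P).erase Q, c x = ∑ x ∈ (S.erase P).erase Q, b x := by
          refine Finset.sum_congr rfl fun x hx => ?_
          have h2 := Finset.mem_erase.mp hx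
          have h1 := Finset.mem_erase.mp h2.2
          exact hcx x h1.1 h2.1
        have : psum c k = psum b k := by
          show ∑ x ∈ S, c x = ∑ x ∈ S, b x
          rw [hrest c, hrest b, hre, hcP, hcQ, hb0]
          omega
        exact ⟨le_of_eq this.symm, fun _ => this⟩
      · -- k = p+1 : P in, Q not
        have hPS : P ∈ S := (hmem P).mpr (by simpa [hP] using hpk)
        have hQS : Q ∉ S := fun hx => by
          have := (hmem Q).mp hx; simp [hQ] at this; omega
        have hre : ∑ x ∈ S.erase P, c x = ∑ x ∈ S.erase P, b x := by
          refine Finset.sum_congr rfl fun x hx => ?_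
          have h1 := Finset.mem_erase.mp hx
          exact hcx x h1.1 (fun he => hQS (he ▸ h1.2))
        have hb : psum b k = ∑ x ∈ S.erase P, b x := by
          show ∑ x ∈ S, b x = _
          rw [← Finset.add_sum_erase _ b hPS, hb0, zero_add]
        have hcs : psum c k = i + ∑ x ∈ S.erase P, b x := by
          show ∑ x ∈ S, c x = _
          rw [← Finset.add_sum_erase _ c hPS, hcP, hre]
        constructor
        · rw [hb, hcs]; omega
        · intro hk; omega
    · -- neither in S
      have : psum c k = psum b k := by
        show ∑ x ∈ S, c x = ∑ x ∈ S, b x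
        refine Finset.sum_congr rfl fun x hx => ?_
        have hxk := (hmem x).mp hx
        refine hcx x ?_ ?_ <;> (intro he; subst he; simp [hP, hQ] at hxk; omega)
      exact ⟨le_of_eq this.symm, fun _ => this⟩
  refine ⟨fun k => (key k).1, ?_⟩
  rw [← psum_of_ge c n le_rfl, ← psum_of_ge b n le_rfl]
  exact (key n).2 (Or.inr hp)

lemma fixSlides_facts {n : ℕ} {a b : Fin n → ℕ} (h : FixSlides a b) :
    Dom a b ∧ (∑ x, b x = ∑ x, a x) := by
  induction h with
  | refl => exact ⟨fun k => le_rfl, rfl⟩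
  | tail _ hbc ih =>
    obtain ⟨hd, hs⟩ := slide_psum hbc
    exact ⟨fun k => le_trans (ih.1 k) (hd k), hs.trans ih.2⟩

def dd {n : ℕ} (b : Fin n → ℕ) : Fin n →₀ ℕ := Finsupp.equivFunOnFinite.symm b

lemma dd_apply {n : ℕ} (b : Fin n → ℕ) (i : Fin n) : dd b i = b i := rfl

lemma dd_inj {n : ℕ} : Function.Injective (dd (n := n)) :=
  Finsupp.equivFunOnFinite.symm.injective

lemma mono_eq {n : ℕ} (b : Fin n → ℕ) : mono b = monomial (dd b) 1 := by
  rw [← prod_X_pow_eq_monomial]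
  unfold mono
  rw [Finset.prod_subset (Finset.subset_univ (dd b).support)]
  · exact Finset.prod_congr rfl fun x _ => by rw [dd_apply]
  · intro x _ hx
    rw [Finsupp.notMem_support_iff.mp hx, pow_zero]

lemma coeff_mono {n : ℕ} (b m : Fin n → ℕ) :
    coeff (dd m) (mono b) = if b = m then 1 else 0 := by
  rw [mono_eq, coeff_monomial]
  by_cases h : b = m
  · simp [h]
  · rw [if_neg (fun he => h (dd_inj he)), if_neg h]

lemma coeff_sum_mono {n : ℕ} (s : Finset (Fin n → ℕ)) (m : Fin n → ℕ) :
    coeff (dd m) (∑ b ∈ s, mono b) = if m ∈ s then 1 else 0 := by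
  rw [coeff_sum]
  rw [Finset.sum_congr rfl fun b _ => coeff_mono b m]
  exact Finset.sum_ite_eq' s m (fun _ => 1)

lemma mem_Lfilter {n : ℕ} {a m : Fin n → ℕ} (h : FixSlides a m) :
    m ∈ (box n (∑ i, a i)).filter (fun b => FixSlides a b) := by
  refine Finset.mem_filter.mpr ⟨?_, h⟩
  have hs := (fixSlides_facts h).2
  refine Fintype.mem_piFinset.mpr fun i => Finset.mem_range.mpr ?_
  have : m i ≤ ∑ x, m x :=
    Finset.single_le_sum (fun x _ => Nat.zero_le (m x)) (Finset.mem_univ i)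
  omega

lemma coeff_Lpart {n : ℕ} (a m : Fin n → ℕ) :
    coeff (dd m) (Lpart a) = if FixSlides a m then 1 else 0 := by
  rw [Lpart, coeff_sum_mono]
  by_cases h : FixSlides a m
  · rw [if_pos (mem_Lfilter h), if_pos h]
  · rw [if_neg (fun hm => h (Finset.mem_filter.mp hm).2), if_neg h]

end LpartAux

/-- the fundamental particle polynomials `{L_a}` form a basis of
`ℤ[x₁,…,xₙ]`: they are linearly independent and span. -/
theorem Lpart_is_basis (n : ℕ) :
    LinearIndependent ℤ (fun a : Fin n → ℕ => Lpart a) ∧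
    Submodule.span ℤ (Set.range fun a : Fin n → ℕ => Lpart a) = ⊤ := by
  classical
  constructor
  · -- linear independence
    rw [linearIndependent_iff']
    intro s g hsum
    by_contra hc
    push_neg at hc
    obtain ⟨i0, hi0s, hi0⟩ := hc
    set t := s.filter (fun b => g b ≠ 0) with ht
    have htne : t.Nonempty := ⟨i0, Finset.mem_filter.mpr ⟨hi0s, hi0⟩⟩
    obtain ⟨a, hat, hmin⟩ := Finset.exists_min_image t LpartAux.mu htne
    have has : a ∈ s := (Finset.mem_filter.mp hat).1
    have hga : g a ≠ 0 := (Finset.mem_filter.mp hat).2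
    have hco := congrArg (MvPolynomial.coeff (LpartAux.dd a)) hsum
    rw [coeff_sum, coeff_zero] at hco
    have hterm : ∀ b ∈ s, coeff (LpartAux.dd a) (g b • Lpart b)
        = g b * (if FixSlides b a then 1 else 0) := by
      intro b _
      rw [MvPolynomial.coeff_smul, LpartAux.coeff_Lpart]
      simp [smul_eq_mul]
    rw [Finset.sum_congr rfl hterm] at hco
    have hsingle : ∑ b ∈ s, g b * (if FixSlides b a then 1 else 0) = g a := by
      rw [Finset.sum_eq_single a]
      · have hrefl : FixSlides a a := Relation.ReflTransGen.refl
        rw [if_pos hrefl, mul_one]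
      · intro b hbs hbne
        by_cases hf : FixSlides b a
        · obtain ⟨hd, -⟩ := LpartAux.fixSlides_facts hf
          have hmu : LpartAux.mu b < LpartAux.mu a :=
            LpartAux.mu_lt hd (fun he => hbne he)
          have hgb : g b = 0 := by
            by_contra hgb
            exact absurd (hmin b (Finset.mem_filter.mpr ⟨hbs, hgb⟩)) (by omega)
          rw [hgb, zero_mul]
        · rw [if_neg hf, mul_zero]
      · intro h; exact absurd has h
    rw [hsingle] at hco
    exact hga hco
  · -- spanning
    set SP := Submodule.span ℤ (Set.range fun a : Fin n → ℕ => Lpart a) with hSP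
    have hmono : ∀ a : Fin n → ℕ, mono a ∈ SP := by
      have key : ∀ N : ℕ, ∀ a : Fin n → ℕ,
          (n + 1) * (∑ x, a x) - LpartAux.mu a = N → mono a ∈ SP := by
        intro N
        induction N using Nat.strong_induction_on with
        | _ N ih =>
          intro a hN
          set T := (box n (∑ i, a i)).filter (fun b => FixSlides a b) with hT
          have haT : a ∈ T := LpartAux.mem_Lfilter Relation.ReflTransGen.refl
          have hLa : Lpart a = mono a + ∑ b ∈ T.erase a, mono b :=
            (Finset.add_sum_erase T mono haT).symm
          have hma : mono a = Lpart a - ∑ b ∈ T.erase a, mono b := by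
            rw [hLa]; ring
          rw [hma]
          refine Submodule.sub_mem _ ?_ ?_
          · exact Submodule.subset_span ⟨a, rfl⟩
          · refine Submodule.sum_mem _ fun b hb => ?_
            have hbne : b ≠ a := (Finset.mem_erase.mp hb).1
            have hbT := (Finset.mem_erase.mp hb).2
            have hfs : FixSlides a b := (Finset.mem_filter.mp hbT).2
            obtain ⟨hd, hs⟩ := LpartAux.fixSlides_facts hfs
            have hmu : LpartAux.mu a < LpartAux.mu b :=
              LpartAux.mu_lt hd (fun he => hbne he.symm)
            have hmub : LpartAux.mu b ≤ (n + 1) * ∑ x, b x := LpartAux.mu_le b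
            have hsum' : (n + 1) * (∑ x, b x) = (n + 1) * ∑ x, a x := by rw [hs]
            exact ih ((n + 1) * (∑ x, b x) - LpartAux.mu b) (by omega) b rfl
      exact fun a => key _ a rfl
    rw [eq_top_iff]
    intro p _
    rw [MvPolynomial.as_sum p]
    refine Submodule.sum_mem _ fun v _ => ?_
    have hmv : MvPolynomial.monomial v (coeff v p) = (coeff v p) • mono (⇑v) := by
      rw [LpartAux.mono_eq]
      have hdd : LpartAux.dd (⇑v) = v := Finsupp.equivFunOnFinite.symm_apply_apply v
      rw [hdd, MvPolynomial.smul_monomial, smul_eq_mul, mul_one]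
    rw [hmv]
    exact Submodule.smul_mem _ _ (hmono ⇑v)


end
end

section
/- The stable limit of a fundamental particle polynomial is zero: for any weak composition a with at least one nonzero part and any fixed n, the polynomial L_{0^m × a} evaluated with x_{n+1} = x_{n+2} = ... = 0 is identically zero for all sufficiently large m. -/
open MvPolynomial
open scoped Classical

noncomputable section

/-- Prepend `m` zeros to a weak composition of length `n`. -/
def prepend {n : ℕ} (m : ℕ) (a : Fin n → ℕ) : Fin (m + n) → ℕ :=
  fun i => if h : (i : ℕ) < m then 0 else a ⟨(i : ℕ) - m, by omega⟩

lemma fixslides_nonzero {n : ℕ} {c b : Fin n → ℕ} (h : FixSlides c b) :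
    ∀ i, c i ≠ 0 → b i ≠ 0 := by
  induction h with
  | refl => intro i h; exact h
  | tail _ hmv ih =>
    intro i hi
    obtain ⟨p, hp, x, y, hb0, hsum, hfix, rfl⟩ := hmv
    by_cases h1 : i = ⟨p + 1, hp⟩
    · subst h1
      rw [Function.update_self]
      exact (hfix rfl hi).ne'
    · rw [Function.update_of_ne h1]
      by_cases h2 : i = ⟨p, Nat.lt_of_succ_lt hp⟩
      · subst h2; exact absurd hb0 (ih _ hi)
      · rw [Function.update_of_ne h2]; exact ih i hi

/-- the stable limit of a fundamental particle polynomial is zero: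
if `a` has a nonzero part then, for all sufficiently large `m`, setting the
variables `x_{n+1}, x_{n+2}, …` to zero kills `L_{0^m × a}`. -/
theorem Lpart_stable_limit_zero {n : ℕ} (a : Fin n → ℕ) (ha : ∃ i, a i ≠ 0) :
    ∃ M : ℕ, ∀ m, M ≤ m →
      MvPolynomial.aeval
        (fun i : Fin (m + n) =>
          if h : (i : ℕ) < n then (X (⟨(i : ℕ), h⟩ : Fin n) : MvPolynomial (Fin n) ℤ) else 0)
        (Lpart (prepend m a)) = 0 := by
  obtain ⟨i₀, hi₀⟩ := ha
  refine ⟨n, fun m hm => ?_⟩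
  rw [Lpart, map_sum]
  apply Finset.sum_eq_zero
  intro b hb
  rw [Finset.mem_filter] at hb
  have key : b ⟨m + (i₀ : ℕ), by omega⟩ ≠ 0 := by
    apply fixslides_nonzero hb.2
    have hval : prepend m a ⟨m + (i₀ : ℕ), by omega⟩ = a i₀ := by
      simp only [prepend]
      rw [dif_neg (by omega)]
      congr 1
      apply Fin.ext; simp
    rw [hval]; exact hi₀
  rw [mono, map_prod]
  apply Finset.prod_eq_zero (Finset.mem_univ (⟨m + (i₀ : ℕ), by omega⟩ : Fin (m + n)))
  rw [map_pow, aeval_X, dif_neg (by simp; omega)]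
  exact zero_pow key


end
end

section
/- Destandardization is idempotent on Demazure-atom semi-skyline fillings: for any weak composition a and any S ∈ ASSF(a), dst(S) is a particle-highest element of ASSF(a), and dst(S) = S if and only if S is particle-highest. -/
open MvPolynomial
open scoped Classical

noncomputable section

/-- A semi-skyline filling of `D(a)` whose first-column entries equal their row
index (the fillings generating the Demazure atom `A_a`).  Rows are 1-indexed in
the paper; here row `r : Fin n` has index `r + 1` and `a r` boxes in columns
`0, 1, …, a r - 1`.  Entries outside the diagram are set to `0`. -/
structure ASSF {n : ℕ} (a : Fin n → ℕ) where
  entry : Fin n → ℕ → ℕ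
  pos : ∀ r c, c < a r → 0 < entry r c
  rowDec : ∀ r c, c + 1 < a r → entry r (c + 1) ≤ entry r c
  colDistinct : ∀ r r' c, r ≠ r' → c < a r → c < a r' → entry r c ≠ entry r' c
  firstCol : ∀ r, 0 < a r → entry r 0 = (r : ℕ) + 1
  /-- Type A triples (γ,α adjacent in the weakly longer lower row `r`, β above α
  in row `r'`) are inversion triples: `β > γ ≥ α` or `γ ≥ α > β`. -/
  tripleA : ∀ r r' : Fin n, ∀ c, r < r' → a r' ≤ a r → c + 1 < a r → c + 1 < a r' →
    entry r c < entry r' (c + 1) ∨ entry r' (c + 1) < entry r (c + 1)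
  /-- Type B triples (γ,α adjacent in the strictly longer higher row `r'`, β below γ
  in row `r`) are inversion triples. -/
  tripleB : ∀ r r' : Fin n, ∀ c, r < r' → a r < a r' → c + 1 < a r' → c < a r →
    entry r' c < entry r c ∨ entry r c < entry r' (c + 1)
  outside : ∀ r c, a r ≤ c → entry r c = 0

/-- The entry `i` occurs in column `c` of the filling `E` of `D(a)`. -/
def InCol {n : ℕ} (a : Fin n → ℕ) (E : Fin n → ℕ → ℕ) (i c : ℕ) : Prop :=
  ∃ r, c < a r ∧ E r c = i

/-- The entry `i` appears somewhere in the filling. -/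
def Appears {n : ℕ} (a : Fin n → ℕ) (E : Fin n → ℕ → ℕ) (i : ℕ) : Prop :=
  ∃ c, InCol a E i c

/-- `j = i↑` is the smallest entry of the filling larger than `i`. -/
def IsUp {n : ℕ} (a : Fin n → ℕ) (E : Fin n → ℕ → ℕ) (i j : ℕ) : Prop :=
  Appears a E j ∧ i < j ∧ ∀ k, Appears a E k → i < k → j ≤ k

/-- `c` is the column of the leftmost occurrence of `i`. -/
def LeftmostCol {n : ℕ} (a : Fin n → ℕ) (E : Fin n → ℕ → ℕ) (i c : ℕ) : Prop :=
  InCol a E i c ∧ ∀ c', InCol a E i c' → c ≤ c'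

/-- The entry `i` violates the particle-highest condition: it appears, its
leftmost occurrence is not in the first column, and no occurrence of `i↑` lies
weakly to the right of its leftmost occurrence. -/
def Violating {n : ℕ} (a : Fin n → ℕ) (E : Fin n → ℕ → ℕ) (i : ℕ) : Prop :=
  Appears a E i ∧
  ∃ c, LeftmostCol a E i c ∧ 0 < c ∧
    ∀ j c', IsUp a E i j → InCol a E j c' → c' < c

/-- A filling is particle-highest if no entry is violating. -/
def ParticleHighest {n : ℕ} (a : Fin n → ℕ) (E : Fin n → ℕ → ℕ) : Prop :=
  ∀ i, ¬ Violating a E i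

/-- One step of destandardization: replace all occurrences of a violating entry
`i` by `i + 1`. -/
def DstStep {n : ℕ} (a : Fin n → ℕ) (E E' : Fin n → ℕ → ℕ) : Prop :=
  ∃ i, Violating a E i ∧
    E' = fun r c => if c < a r ∧ E r c = i then i + 1 else E r c

/-- Total weight of the filling restricted to the diagram. -/
def wt {n : ℕ} (a : Fin n → ℕ) (E : Fin n → ℕ → ℕ) : ℕ :=
  ∑ r, ∑ c ∈ Finset.range (a r), E r c

lemma entry_le {n : ℕ} {a : Fin n → ℕ} (S : ASSF a) (r : Fin n) (c : ℕ)
    (hc : c < a r) : S.entry r c ≤ n := by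
  have h0 : ∀ c, c < a r → S.entry r c ≤ S.entry r 0 := by
    intro c
    induction c with
    | zero => intro _; exact le_refl _
    | succ c ih =>
      intro h
      exact le_trans (S.rowDec r c h) (ih (Nat.lt_of_succ_lt h))
  have h1 := h0 c hc
  have h2 := S.firstCol r (Nat.pos_of_ne_zero (by omega))
  have h3 := r.isLt
  omega

lemma wt_le {n : ℕ} {a : Fin n → ℕ} (S : ASSF a) :
    wt a S.entry ≤ ∑ r, a r * n := by
  apply Finset.sum_le_sum
  intro r _
  calc ∑ c ∈ Finset.range (a r), S.entry r c
      ≤ ∑ _c ∈ Finset.range (a r), n := by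
        apply Finset.sum_le_sum
        intro c hc
        exact entry_le S r c (Finset.mem_range.mp hc)
    _ = a r * n := by simp [Finset.sum_const, Finset.card_range, Nat.mul_comm]

/-- Arithmetic core: an inversion triple stays an inversion triple after the
replacement `i ↦ i+1`, given the column constraints. -/
lemma inv_pres (i c₀ γ α β cγ cβ : ℕ) (hβγ : cβ ≤ cγ + 1) (hγβ : cγ ≤ cβ)
    (h1 : γ = i → c₀ ≤ cγ) (h2 : β = i → c₀ ≤ cβ)
    (h3 : α = i + 1 → cγ + 1 < c₀) (h4 : β = i + 1 → cβ < c₀)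
    (h5 : γ = i + 1 → cγ < c₀)
    (hαγ : α ≤ γ) (hold : γ < β ∨ β < α) :
    (if γ = i then i + 1 else γ) < (if β = i then i + 1 else β) ∨
    (if β = i then i + 1 else β) < (if α = i then i + 1 else α) := by
  split_ifs <;> omega

lemma step_exists {n : ℕ} {a : Fin n → ℕ} (S : ASSF a) (i : ℕ)
    (hv : Violating a S.entry i) :
    ∃ S' : ASSF a, DstStep a S.entry S'.entry ∧ wt a S.entry < wt a S'.entry := by
  obtain ⟨happ, c₀, hlm, hc₀pos, hup⟩ := hv
  set E' : Fin n → ℕ → ℕ :=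
    fun r c => if c < a r ∧ S.entry r c = i then i + 1 else S.entry r c with hE'
  -- Key fact 1: every occurrence of i is in column ≥ c₀
  have K1 : ∀ (r : Fin n) (c : ℕ), c < a r → S.entry r c = i → c₀ ≤ c := by
    intro r c hc heq
    exact hlm.2 c ⟨r, hc, heq⟩
  -- Key fact 2: every occurrence of i+1 is in column < c₀
  have K2 : ∀ (r : Fin n) (c : ℕ), c < a r → S.entry r c = i + 1 → c < c₀ := by
    intro r c hc heq
    have hApp : Appears a S.entry (i + 1) := ⟨c, r, hc, heq⟩
    have hIsUp : IsUp a S.entry i (i + 1) :=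
      ⟨hApp, Nat.lt_succ_self i, fun k _ hik => hik⟩
    exact hup (i + 1) c hIsUp ⟨r, hc, heq⟩
  -- values of E'
  have hval : ∀ (r : Fin n) (c : ℕ), c < a r →
      E' r c = if S.entry r c = i then i + 1 else S.entry r c := by
    intro r c hc
    by_cases h : S.entry r c = i <;> simp [hE', hc, h]
  refine ⟨⟨E', ?_, ?_, ?_, ?_, ?_, ?_, ?_⟩, ?_, ?_⟩
  · -- pos
    intro r c hc
    rw [hval r c hc]
    split_ifs with h
    · omega
    · exact S.pos r c hc
  · -- rowDec
    intro r c hc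
    have hc' : c < a r := Nat.lt_of_succ_lt hc
    rw [hval r c hc', hval r (c + 1) hc]
    have hd := S.rowDec r c hc
    split_ifs <;> omega
  · -- colDistinct
    intro r r' c hrr hc hc'
    rw [hval r c hc, hval r' c hc']
    have hne := S.colDistinct r r' c hrr hc hc'
    have k1 := K1 r c hc
    have k1' := K1 r' c hc'
    have k2 := K2 r c hc
    have k2' := K2 r' c hc'
    split_ifs <;> omega
  · -- firstCol
    intro r hr
    rw [hval r 0 hr]
    have := S.firstCol r hr
    have hni : S.entry r 0 ≠ i := by
      intro h
      have := K1 r 0 hr h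
      omega
    rw [if_neg hni, this]
  · -- tripleA
    intro r r' c hrr har hc hc'
    have hcr : c < a r := Nat.lt_of_succ_lt hc
    rw [hval r c hcr, hval r' (c + 1) hc', hval r (c + 1) hc]
    exact inv_pres i c₀ (S.entry r c) (S.entry r (c + 1)) (S.entry r' (c + 1)) c (c + 1)
      (by omega) (by omega)
      (K1 r c hcr) (K1 r' (c + 1) hc')
      (K2 r (c + 1) hc) (K2 r' (c + 1) hc') (K2 r c hcr)
      (S.rowDec r c hc) (S.tripleA r r' c hrr har hc hc')
  · -- tripleB
    intro r r' c hrr har hc hc'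
    have hcr' : c < a r' := Nat.lt_of_succ_lt hc
    rw [hval r' c hcr', hval r c hc', hval r' (c + 1) hc]
    exact inv_pres i c₀ (S.entry r' c) (S.entry r' (c + 1)) (S.entry r c) c c
      (by omega) (by omega)
      (K1 r' c hcr') (K1 r c hc')
      (K2 r' (c + 1) hc) (K2 r c hc') (K2 r' c hcr')
      (S.rowDec r' c hc) (S.tripleB r r' c hrr har hc hc')
  · -- outside
    intro r c hc
    have h : ¬ (c < a r) := by omega
    simp only [hE', h, false_and, if_false]
    exact S.outside r c hc
  · -- DstStep
    exact ⟨i, ⟨happ, c₀, hlm, hc₀pos, hup⟩, rfl⟩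
  · -- wt increases
    obtain ⟨cw, rw, hcw, heqw⟩ := happ
    show wt a S.entry < wt a E'
    apply Finset.sum_lt_sum
    · intro r _
      apply Finset.sum_le_sum
      intro c hcmem
      have hc : c < a r := Finset.mem_range.mp hcmem
      rw [hval r c hc]
      split_ifs <;> omega
    · refine ⟨rw, Finset.mem_univ _, ?_⟩
      apply Finset.sum_lt_sum
      · intro c hcmem
        have hc : c < a rw := Finset.mem_range.mp hcmem
        rw [hval rw c hc]
        split_ifs <;> omega
      · refine ⟨cw, Finset.mem_range.mpr hcw, ?_⟩
        rw [hval rw cw hcw]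
        simp [heqw]

lemma aux_reach {n : ℕ} (a : Fin n → ℕ) :
    ∀ (k : ℕ) (S : ASSF a), (∑ r, a r * n) - wt a S.entry ≤ k →
      ∃ S' : ASSF a,
        Relation.ReflTransGen (DstStep a) S.entry S'.entry ∧
        ParticleHighest a S'.entry := by
  intro k
  induction k with
  | zero =>
    intro S hk
    by_cases h : ParticleHighest a S.entry
    · exact ⟨S, Relation.ReflTransGen.refl, h⟩
    · simp only [ParticleHighest, not_forall, not_not] at h
      obtain ⟨i, hi⟩ := h
      obtain ⟨S₂, _, hwt⟩ := step_exists S i hi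
      have h1 := wt_le S
      have h2 := wt_le S₂
      omega
  | succ k ih =>
    intro S hk
    by_cases h : ParticleHighest a S.entry
    · exact ⟨S, Relation.ReflTransGen.refl, h⟩
    · simp only [ParticleHighest, not_forall, not_not] at h
      obtain ⟨i, hi⟩ := h
      obtain ⟨S₂, hstep, hwt⟩ := step_exists S i hi
      have h2 := wt_le S₂
      obtain ⟨S', hreach, hph⟩ := ih S₂ (by omega)
      exact ⟨S', Relation.ReflTransGen.head hstep hreach, hph⟩

/-- destandardization of any `S ∈ ASSF(a)` terminates at a
particle-highest element `S'` of `ASSF(a)`, and `dst(S) = S` if and only if `S`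
is particle-highest. -/
theorem dst_particle_highest {n : ℕ} (a : Fin n → ℕ) (S : ASSF a) :
    ∃ S' : ASSF a,
      Relation.ReflTransGen (DstStep a) S.entry S'.entry ∧
      ParticleHighest a S'.entry ∧
      (S'.entry = S.entry ↔ ParticleHighest a S.entry) := by
  by_cases h : ParticleHighest a S.entry
  · exact ⟨S, Relation.ReflTransGen.refl, h, by simp [h]⟩
  · obtain ⟨S', hreach, hph⟩ :=
      aux_reach a ((∑ r, a r * n) - wt a S.entry) S le_rfl
    exact ⟨S', hreach, hph, ⟨fun he => he ▸ hph, fun hp => absurd hp h⟩⟩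

end
end

section
/- Moving rows preserves LRS structure: if L is a Littlewood–Richardson skew skyline filling and row i+1 (resp. i−1) is empty, then the diagram obtained by moving all entries of row i to row i+1 (resp. i−1) still satisfies the triple (inversion) conditions, and its column reading word is contre-lattice if and only if that of L is. -/
open MvPolynomial
open scoped Classical

noncomputable section

/-- The value of the box of an LRS in row `r`, column `c` (column `0` is the
basement; columns `c ≤ a r` contain `∗`, columns `a r < c ≤ b r` contain the
numeric entry `E r c`).  Values live in `ℕ ×ₗ ℕ`: `∗ = ∞` exceeds all numbers,
`∗`'s in a row are equal, and `∗`'s in a column increase from top to bottom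
(row `1`, i.e. `r = 0`, is the lowest row). -/
def lrsVal {n : ℕ} (a : Fin n → ℕ) (E : Fin n → ℕ → ℕ) (r : Fin n) (c : ℕ) : ℕ ×ₗ ℕ :=
  if c ≤ a r then toLex (1, n - (r : ℕ)) else toLex (0, E r c)

/-- All triples of an LRS-type filling of shape `b/a` are inversion triples.
Type A: `γ, α` adjacent in the weakly longer lower row `r` (columns `c, c+1`),
`β` above `α` in row `r'`.  Type B: `γ, α` adjacent in the strictly longer
higher row `r'`, `β` below `γ` in row `r`. -/
def TripleCond {n : ℕ} (a b : Fin n → ℕ) (E : Fin n → ℕ → ℕ) : Prop :=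
  (∀ r r' : Fin n, ∀ c : ℕ, r < r' → b r' ≤ b r → c + 1 ≤ b r → c + 1 ≤ b r' →
    lrsVal a E r c < lrsVal a E r' (c + 1) ∨ lrsVal a E r' (c + 1) < lrsVal a E r (c + 1)) ∧
  (∀ r r' : Fin n, ∀ c : ℕ, r < r' → b r < b r' → c + 1 ≤ b r' → c ≤ b r →
    lrsVal a E r' c < lrsVal a E r c ∨ lrsVal a E r c < lrsVal a E r' (c + 1))

/-- An LRS of shape `b/a`: inner boxes and basement are `∗`, remaining boxes of
`D(b)` carry positive integers, rows weakly decrease, no column repeats among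
numeric entries, and all triples are inversion triples. -/
def IsLRS {n : ℕ} (a b : Fin n → ℕ) (E : Fin n → ℕ → ℕ) : Prop :=
  (∀ r, a r ≤ b r) ∧
  (∀ r c, a r < c → c ≤ b r → 0 < E r c) ∧
  (∀ r c, c + 1 ≤ b r → lrsVal a E r (c + 1) ≤ lrsVal a E r c) ∧
  (∀ r r' : Fin n, ∀ c, r ≠ r' → a r < c → c ≤ b r → a r' < c → c ≤ b r' →
    E r c ≠ E r' c) ∧
  TripleCond a b E

/-- The column word of an LRS: read numeric entries bottom-to-top in each
column, rightmost column first, skipping `∗`. -/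
def lrsWord {n : ℕ} (a b : Fin n → ℕ) (E : Fin n → ℕ → ℕ) : List ℕ :=
  ((List.range (∑ r, b r)).reverse).flatMap fun c =>
    (List.finRange n).filterMap fun r =>
      if a r < c + 1 ∧ c + 1 ≤ b r then some (E r (c + 1)) else none

/-- A word (largest letter `k`) is contre-lattice if every prefix contains at
least as many `k`'s as `(k-1)`'s, at least as many `(k-1)`'s as `(k-2)`'s, etc. -/
def ContreLattice (w : List ℕ) : Prop :=
  ∀ t j, 1 ≤ j → j + 1 ≤ w.foldr max 0 →
    (w.take t).count j ≤ (w.take t).count (j + 1)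

/-!
Swapping rows `i` and `i + 1` keeps the relative order of every other pair of rows, and `lrsVal`
sees row indices only through the heights of the `∗`s, so the triples of all those pairs are
triples of the original filling. Of the pair `(i, i + 1)` one row is empty; the only triple it can
still carry sits in the basement column, where the `∗`s increase downward. An empty row contributes
no letter to any column, so the column word does not change at all.
-/

namespace List

variable {α β : Type*}

theorem take_append_getElem_cons_getElem_cons_drop (l : List α) (i : ℕ) (h : i + 1 < l.length) :
    l.take i ++ l[i] :: l[i + 1] :: l.drop (i + 2) = l := by
  rw [← drop_eq_getElem_cons, ← drop_eq_getElem_cons, take_append_drop]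

theorem map_swap_append_cons_cons [DecidableEq α] {l₁ l₂ : List α} {x y : α}
    (hnd : (l₁ ++ x :: y :: l₂).Nodup) :
    (l₁ ++ x :: y :: l₂).map (Equiv.swap x y) = l₁ ++ y :: x :: l₂ := by
  have fixes : ∀ l : List α, x ∉ l → y ∉ l → l.map (Equiv.swap x y) = l := fun l hx hy =>
    (map_congr_left fun z hz => Equiv.swap_apply_of_ne_of_ne (ne_of_mem_of_not_mem hz hx)
      (ne_of_mem_of_not_mem hz hy)).trans (map_id l)
  simp only [nodup_append, nodup_cons, mem_cons, not_or] at hnd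
  obtain ⟨-, ⟨⟨-, hx₂⟩, hy₂, -⟩, hdisj⟩ := hnd
  rw [map_append, map_cons, map_cons, Equiv.swap_apply_left, Equiv.swap_apply_right,
    fixes l₁ (fun h => hdisj x h x (Or.inl rfl) rfl) (fun h => hdisj y h y (Or.inr (Or.inl rfl)) rfl),
    fixes l₂ hx₂ hy₂]

theorem filterMap_append_cons_cons_comm (f : α → Option β) (l₁ l₂ : List α) {x y : α}
    (h : f x = none ∨ f y = none) :
    (l₁ ++ x :: y :: l₂).filterMap f = (l₁ ++ y :: x :: l₂).filterMap f := by
  rcases h with h | h <;> simp [filterMap_append, filterMap_cons, h]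

end List

theorem CovBy.swap_lt_swap {α : Type*} [LinearOrder α] {a b r r' : α} (hab : a ⋖ b)
    (hr : r < r') (hne : ¬(r = a ∧ r' = b)) : Equiv.swap a b r < Equiv.swap a b r' := by
  have above : ∀ c, a < c → b ≤ c := fun c hc => not_lt.1 (hab.2 hc)
  have below : ∀ c, c < b → c ≤ a := fun c => hab.le_of_lt
  have hlt := hab.lt
  rw [Equiv.swap_apply_def, Equiv.swap_apply_def]
  split_ifs <;> grind

theorem List.filterMap_finRange_comp_swap {n : ℕ} {β : Type*} (f : Fin n → Option β) (i : ℕ)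
    (hi : i + 1 < n) (h : f ⟨i, Nat.lt_of_succ_lt hi⟩ = none ∨ f ⟨i + 1, hi⟩ = none) :
    (finRange n).filterMap (f ∘ Equiv.swap ⟨i, Nat.lt_of_succ_lt hi⟩ ⟨i + 1, hi⟩) =
      (finRange n).filterMap f := by
  have split := take_append_getElem_cons_getElem_cons_drop (finRange n) i (by simpa using hi)
  simp only [getElem_finRange, Fin.cast_mk] at split
  generalize take i (finRange n) = l₁, drop (i + 2) (finRange n) = l₂ at split
  rw [← filterMap_map, ← split, map_swap_append_cons_cons (split ▸ nodup_finRange n),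
    filterMap_append_cons_cons_comm f _ _ h.symm]

section LRS

variable {n : ℕ} (a b : Fin n → ℕ) (E : Fin n → ℕ → ℕ)

def TriplesAt (r r' : Fin n) : Prop :=
  (∀ c : ℕ, b r' ≤ b r → c + 1 ≤ b r → c + 1 ≤ b r' →
    lrsVal a E r c < lrsVal a E r' (c + 1) ∨ lrsVal a E r' (c + 1) < lrsVal a E r (c + 1)) ∧
  (∀ c : ℕ, b r < b r' → c + 1 ≤ b r' → c ≤ b r →
    lrsVal a E r' c < lrsVal a E r c ∨ lrsVal a E r c < lrsVal a E r' (c + 1))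

theorem tripleCond_iff_forall_triplesAt :
    TripleCond a b E ↔ ∀ r r' : Fin n, r < r' → TriplesAt a b E r r' :=
  ⟨fun h r r' hr => ⟨fun c => h.1 r r' c hr, fun c => h.2 r r' c hr⟩,
    fun h => ⟨fun r r' c hr => (h r r' hr).1 c, fun r r' c hr => (h r r' hr).2 c⟩⟩

theorem lrsVal_perm_lt_lrsVal_perm_iff (σ : Equiv.Perm (Fin n)) {r r' : Fin n}
    (hσ : r' < r ↔ σ r' < σ r) (c c' : ℕ) :
    lrsVal (a ∘ σ) (fun s c => E (σ s) c) r c < lrsVal (a ∘ σ) (fun s c => E (σ s) c) r' c' ↔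
      lrsVal a E (σ r) c < lrsVal a E (σ r') c' := by
  rw [Fin.lt_def, Fin.lt_def] at hσ
  have := r.isLt; have := r'.isLt; have := (σ r).isLt; have := (σ r').isLt
  unfold lrsVal
  simp only [Function.comp_apply]
  split_ifs
  · simp only [Prod.Lex.toLex_lt_toLex, lt_self_iff_false, true_and, false_or]
    omega
  all_goals simp [Prod.Lex.toLex_lt_toLex]

theorem triplesAt_perm_iff (σ : Equiv.Perm (Fin n)) {r r' : Fin n} (hr : r < r')
    (hσ : σ r < σ r') :
    TriplesAt (a ∘ σ) (b ∘ σ) (fun s c => E (σ s) c) r r' ↔ TriplesAt a b E (σ r) (σ r') := by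
  simp only [TriplesAt, Function.comp_apply,
    lrsVal_perm_lt_lrsVal_perm_iff a E σ (iff_of_false hr.asymm hσ.asymm),
    lrsVal_perm_lt_lrsVal_perm_iff a E σ (iff_of_true hr hσ)]

theorem triplesAt_of_eq_zero {r r' : Fin n} (hr : r < r') (h : b r = 0 ∨ b r' = 0) :
    TriplesAt a b E r r' := by
  refine ⟨fun c _ h₁ h₂ => by omega, fun c hb _ hc => ?_⟩
  have hc : c = 0 := by omega
  subst hc
  left
  rw [Fin.lt_def] at hr
  have := r'.isLt
  simp only [lrsVal, zero_le, if_true, Prod.Lex.toLex_lt_toLex, lt_self_iff_false, true_and,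
    false_or]
  omega

theorem tripleCond_comp_swap_of_eq_zero (h : TripleCond a b E) (i : ℕ) (hi : i + 1 < n)
    (hempty : b ⟨i + 1, hi⟩ = 0 ∨ b ⟨i, Nat.lt_of_succ_lt hi⟩ = 0) :
    TripleCond (a ∘ Equiv.swap ⟨i, Nat.lt_of_succ_lt hi⟩ ⟨i + 1, hi⟩)
      (b ∘ Equiv.swap ⟨i, Nat.lt_of_succ_lt hi⟩ ⟨i + 1, hi⟩)
      (fun r c => E (Equiv.swap (⟨i, Nat.lt_of_succ_lt hi⟩ : Fin n) ⟨i + 1, hi⟩ r) c) := by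
  have hcov : (⟨i, Nat.lt_of_succ_lt hi⟩ : Fin n) ⋖ ⟨i + 1, hi⟩ :=
    Fin.covBy_iff.2 (Nat.covBy_iff_add_one_eq.2 rfl)
  rw [tripleCond_iff_forall_triplesAt] at h ⊢
  intro r r' hr
  by_cases hpair : r = ⟨i, Nat.lt_of_succ_lt hi⟩ ∧ r' = ⟨i + 1, hi⟩
  · obtain ⟨rfl, rfl⟩ := hpair
    refine triplesAt_of_eq_zero _ _ _ hr ?_
    simpa only [Function.comp_apply, Equiv.swap_apply_left, Equiv.swap_apply_right] using hempty
  · have hσ := hcov.swap_lt_swap hr hpair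
    exact (triplesAt_perm_iff a b E _ hr hσ).2 (h _ _ hσ)

theorem lrsWord_comp_swap_of_eq_zero (i : ℕ) (hi : i + 1 < n)
    (hempty : b ⟨i + 1, hi⟩ = 0 ∨ b ⟨i, Nat.lt_of_succ_lt hi⟩ = 0) :
    lrsWord (a ∘ Equiv.swap ⟨i, Nat.lt_of_succ_lt hi⟩ ⟨i + 1, hi⟩)
        (b ∘ Equiv.swap ⟨i, Nat.lt_of_succ_lt hi⟩ ⟨i + 1, hi⟩)
        (fun r c => E (Equiv.swap (⟨i, Nat.lt_of_succ_lt hi⟩ : Fin n) ⟨i + 1, hi⟩ r) c) =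
      lrsWord a b E := by
  unfold lrsWord
  simp only [Function.comp_apply, Equiv.sum_comp]
  congr 1
  funext c
  refine List.filterMap_finRange_comp_swap
    (fun r => if a r < c + 1 ∧ c + 1 ≤ b r then some (E r (c + 1)) else none) i hi ?_
  rcases hempty with h | h <;> simp [h]

end LRS

/-- moving an occupied row of an LRS into an adjacent empty row
(up if row `i+1` is empty, down if row `i` is empty — i.e. swapping the two
adjacent rows, one of which is empty) preserves the triple (inversion)
conditions, and the resulting column word is contre-lattice if and only if the
original one is. -/
theorem lrs_swap_rows {n : ℕ} (a b : Fin n → ℕ) (E : Fin n → ℕ → ℕ)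
    (h : IsLRS a b E) (i : ℕ) (hi : i + 1 < n)
    (hempty : b ⟨i + 1, hi⟩ = 0 ∨ b ⟨i, Nat.lt_of_succ_lt hi⟩ = 0) :
    TripleCond (a ∘ Equiv.swap ⟨i, Nat.lt_of_succ_lt hi⟩ ⟨i + 1, hi⟩)
        (b ∘ Equiv.swap ⟨i, Nat.lt_of_succ_lt hi⟩ ⟨i + 1, hi⟩)
        (fun r c => E (Equiv.swap (⟨i, Nat.lt_of_succ_lt hi⟩ : Fin n) ⟨i + 1, hi⟩ r) c) ∧
    (ContreLattice
        (lrsWord (a ∘ Equiv.swap ⟨i, Nat.lt_of_succ_lt hi⟩ ⟨i + 1, hi⟩)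
          (b ∘ Equiv.swap ⟨i, Nat.lt_of_succ_lt hi⟩ ⟨i + 1, hi⟩)
          (fun r c => E (Equiv.swap (⟨i, Nat.lt_of_succ_lt hi⟩ : Fin n) ⟨i + 1, hi⟩ r) c)) ↔
      ContreLattice (lrsWord a b E)) :=
  ⟨tripleCond_comp_swap_of_eq_zero a b E h.2.2.2.2 i hi hempty,
    by rw [lrsWord_comp_swap_of_eq_zero a b E i hi hempty]⟩

end
end

section
/- The map φ sending a quasi-key tableau T (with first-column entries equal to row indices) to the array obtained by top-justifying the columns of T and sorting each column decreasingly top-to-bottom yields a reverse semistandard Young tableau with the same column sets as T. -/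
open MvPolynomial
open scoped Classical

noncomputable section

/-- A quasi-key tableau of shape `a` whose first-column entries equal their row
index (`qKT^(1)(a)`).  Row `r : Fin n` has index `r + 1` and boxes in columns
`0, …, a r - 1`; entries outside the diagram are `0`. -/
structure QKT1 {n : ℕ} (a : Fin n → ℕ) where
  entry : Fin n → ℕ → ℕ
  pos : ∀ r c, c < a r → 0 < entry r c
  rowDec : ∀ r c, c + 1 < a r → entry r (c + 1) ≤ entry r c
  rowBound : ∀ r c, c < a r → entry r c ≤ (r : ℕ) + 1
  colDistinct : ∀ r r' c, r ≠ r' → c < a r → c < a r' → entry r c ≠ entry r' c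
  firstCol : ∀ r, 0 < a r → entry r 0 = (r : ℕ) + 1
  /-- Condition (3): if entry `i` (in the higher row `r'`) is above entry `k`
  (in row `r`) in the same column with `i < k`, then the box immediately right
  of `k` exists and its entry `j` satisfies `i < j`. -/
  cond3 : ∀ r r' : Fin n, ∀ c, r < r' → c < a r → c < a r' →
    entry r' c < entry r c → c + 1 < a r ∧ entry r' c < entry r (c + 1)
  /-- Condition (4): if the higher row `r'` is strictly longer than the lower
  row `r`, then an entry in column `c` of row `r` is smaller than the entry in
  column `c + 1` of row `r'`. -/
  cond4 : ∀ r r' : Fin n, ∀ c, r < r' → a r < a r' → c < a r → c + 1 < a r' →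
    entry r c < entry r' (c + 1)
  outside : ∀ r c, a r ≤ c → entry r c = 0

/-- The list of entries in column `c` of a filling of `D(a)` (bottom to top). -/
def rawCol {n : ℕ} (a : Fin n → ℕ) (E : Fin n → ℕ → ℕ) (c : ℕ) : List ℕ :=
  (List.finRange n).filterMap fun r => if c < a r then some (E r c) else none

/-- The number of boxes in column `c` of `D(a)`. -/
def colSize {n : ℕ} (a : Fin n → ℕ) (c : ℕ) : ℕ := (rawCol a (fun _ _ => 0) c).length

/-- Column `c` sorted into decreasing order (top-justify and sort each column
decreasingly from the top): this is the `c`-th column of `φ(T)`. -/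
def sortedCol {n : ℕ} (a : Fin n → ℕ) (E : Fin n → ℕ → ℕ) (c : ℕ) : List ℕ :=
  (rawCol a E c).insertionSort (· ≥ ·)

/-- The entry of `φ(T)` in row `k` from the top, column `c`. -/
def phiEntry {n : ℕ} (a : Fin n → ℕ) (E : Fin n → ℕ → ℕ) (k c : ℕ) : ℕ :=
  (sortedCol a E c).getD k 0

/-! The `k`-th entry of a decreasingly sorted list is `≥ v` exactly when at least `k + 1` of its
entries are `≥ v`. Hence the row condition of `φ(T)` follows from comparing counts: since rows of
`T` weakly decrease, each box of column `c + 1` has a box of column `c` in the same row with at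
least as large an entry, so column `c + 1` has at most as many entries `≥ v` as column `c`. Columns
of `φ(T)` strictly decrease because the column entries of `T` are distinct. -/

namespace List

variable {α : Type*} [LinearOrder α]

theorem SortedGE.le_getElem_iff_lt_countP {s : List α} (hs : s.SortedGE) {k : ℕ}
    (hk : k < s.length) (v : α) : v ≤ s[k] ↔ k < s.countP (fun x => decide (v ≤ x)) := by
  constructor
  · intro hv
    have hprefix : ∀ x ∈ s.take (k + 1), decide (v ≤ x) = true := by
      intro x hx
      obtain ⟨i, hi, rfl⟩ := getElem_of_mem hx
      simp only [length_take, getElem_take, decide_eq_true_eq] at hi ⊢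
      exact hv.trans (hs.antitone_get (a := ⟨i, by omega⟩) (b := ⟨k, hk⟩) (by simp; omega))
    calc k < (s.take (k + 1)).length := by simp; omega
      _ = (s.take (k + 1)).countP (fun x => decide (v ≤ x)) := (countP_eq_length.mpr hprefix).symm
      _ ≤ s.countP (fun x => decide (v ≤ x)) := (take_sublist _ _).countP_le
  · intro hcount
    by_contra! hv
    have hsuffix : (s.drop k).countP (fun x => decide (v ≤ x)) = 0 := by
      refine countP_eq_zero.mpr fun x hx => ?_
      obtain ⟨i, hi, rfl⟩ := getElem_of_mem hx
      simp only [length_drop, getElem_drop, decide_eq_true_eq, not_le] at hi ⊢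
      exact (hs.antitone_get (a := ⟨k, hk⟩) (b := ⟨k + i, by omega⟩) (by simp)).trans_lt hv
    have hprefix := countP_le_length (l := s.take k) (p := fun x => decide (v ≤ x))
    rw [← take_append_drop k s, countP_append, hsuffix] at hcount
    simp only [length_take] at hprefix
    omega

theorem SortedGE.getD_le_getD_of_countP_le {s t : List α} (hs : s.SortedGE) (ht : t.SortedGE)
    (hcount : ∀ v, s.countP (fun x => decide (v ≤ x)) ≤ t.countP (fun x => decide (v ≤ x)))
    {k : ℕ} (hk : k < s.length) (d : α) : s.getD k d ≤ t.getD k d := by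
  have hs_k : k < s.countP (fun x => decide (s[k] ≤ x)) := (hs.le_getElem_iff_lt_countP hk _).mp le_rfl
  have ht_k : k < t.countP (fun x => decide (s[k] ≤ x)) := hs_k.trans_le (hcount _)
  have hkt : k < t.length := ht_k.trans_le countP_le_length
  rw [getD_eq_getElem _ _ hk, getD_eq_getElem _ _ hkt]
  exact (ht.le_getElem_iff_lt_countP hkt _).mpr ht_k

end List

section Phi

variable {n : ℕ} {a : Fin n → ℕ} {E : Fin n → ℕ → ℕ}

theorem rawCol_eq_map (a : Fin n → ℕ) (E : Fin n → ℕ → ℕ) (c : ℕ) :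
    rawCol a E c = ((List.finRange n).filter (fun r => decide (c < a r))).map (E · c) := by
  unfold rawCol
  induction List.finRange n with
  | nil => rfl
  | cons r l ih => by_cases h : c < a r <;> simp [h, ih]

theorem length_rawCol (a : Fin n → ℕ) (E : Fin n → ℕ → ℕ) (c : ℕ) :
    (rawCol a E c).length = colSize a c := by
  simp only [colSize, rawCol_eq_map, List.length_map]

theorem colSize_succ_le (a : Fin n → ℕ) (c : ℕ) : colSize a (c + 1) ≤ colSize a c := by
  simp only [colSize, rawCol_eq_map, List.length_map, ← List.countP_eq_length_filter]
  exact List.countP_mono_left fun r _ h => by simp only [decide_eq_true_eq] at *; omega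

theorem countP_rawCol (a : Fin n → ℕ) (E : Fin n → ℕ → ℕ) (c : ℕ) (p : ℕ → Bool) :
    (rawCol a E c).countP p = (List.finRange n).countP (fun r => p (E r c) && decide (c < a r)) := by
  rw [rawCol_eq_map, List.countP_map, List.countP_filter]
  rfl

theorem countP_rawCol_succ_le (hrow : ∀ r c, c + 1 < a r → E r (c + 1) ≤ E r c) (c v : ℕ) :
    (rawCol a E (c + 1)).countP (fun x => decide (v ≤ x)) ≤
      (rawCol a E c).countP (fun x => decide (v ≤ x)) := by
  rw [countP_rawCol, countP_rawCol]
  refine List.countP_mono_left fun r _ h => ?_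
  simp only [Bool.and_eq_true, decide_eq_true_eq] at h ⊢
  exact ⟨h.1.trans (hrow r c h.2), by omega⟩

theorem nodup_rawCol (hcol : ∀ r r' c, r ≠ r' → c < a r → c < a r' → E r c ≠ E r' c) (c : ℕ) :
    (rawCol a E c).Nodup := by
  rw [rawCol_eq_map]
  refine List.Nodup.map_on (fun r hr r' hr' heq => ?_) ((List.nodup_finRange n).filter _)
  simp only [List.mem_filter, decide_eq_true_eq] at hr hr'
  by_contra hne
  exact hcol r r' c hne hr.2 hr'.2 heq

theorem sortedCol_perm (a : Fin n → ℕ) (E : Fin n → ℕ → ℕ) (c : ℕ) :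
    (sortedCol a E c).Perm (rawCol a E c) :=
  List.perm_insertionSort _ _

theorem sortedCol_sortedGE (a : Fin n → ℕ) (E : Fin n → ℕ → ℕ) (c : ℕ) :
    (sortedCol a E c).SortedGE :=
  List.sortedGE_insertionSort

theorem length_sortedCol (a : Fin n → ℕ) (E : Fin n → ℕ → ℕ) (c : ℕ) :
    (sortedCol a E c).length = colSize a c := by
  rw [(sortedCol_perm a E c).length_eq, length_rawCol]

theorem phiEntry_succ_col_le (hrow : ∀ r c, c + 1 < a r → E r (c + 1) ≤ E r c) {k c : ℕ}
    (hk : k < colSize a (c + 1)) : phiEntry a E k (c + 1) ≤ phiEntry a E k c := by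
  refine (sortedCol_sortedGE a E (c + 1)).getD_le_getD_of_countP_le (sortedCol_sortedGE a E c)
    (fun v => ?_) (by rwa [length_sortedCol]) 0
  rw [(sortedCol_perm a E _).countP_eq, (sortedCol_perm a E _).countP_eq]
  exact countP_rawCol_succ_le hrow c v

theorem phiEntry_succ_row_lt (hcol : ∀ r r' c, r ≠ r' → c < a r → c < a r' → E r c ≠ E r' c)
    {k c : ℕ} (hk : k + 1 < colSize a c) : phiEntry a E (k + 1) c < phiEntry a E k c := by
  have hstrict : (sortedCol a E c).SortedGT :=
    (sortedCol_sortedGE a E c).sortedGT_of_nodup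
      ((sortedCol_perm a E c).nodup_iff.mpr (nodup_rawCol hcol c))
  rw [← length_sortedCol a E c] at hk
  rw [phiEntry, phiEntry, List.getD_eq_getElem _ _ hk, List.getD_eq_getElem _ _ (by omega)]
  exact hstrict.strictAnti_get (a := ⟨k, by omega⟩) (b := ⟨k + 1, hk⟩) (by simp)

end Phi

/-- for `T ∈ qKT^(1)(a)`, top-justifying the columns of `T` and
sorting each column decreasingly yields a reverse semistandard Young tableau
`φ(T)`: the shape is a partition, rows weakly decrease, columns strictly
decrease top-to-bottom, and the column sets agree with those of `T`. -/
theorem phi_revSSYT {n : ℕ} (a : Fin n → ℕ) (T : QKT1 a) :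
    (∀ c, colSize a (c + 1) ≤ colSize a c) ∧
    (∀ k c, k < colSize a (c + 1) →
      phiEntry a T.entry k (c + 1) ≤ phiEntry a T.entry k c) ∧
    (∀ k c, k + 1 < colSize a c →
      phiEntry a T.entry (k + 1) c < phiEntry a T.entry k c) ∧
    (∀ c, (sortedCol a T.entry c).Perm (rawCol a T.entry c)) :=
  ⟨colSize_succ_le a, fun _ _ => phiEntry_succ_col_le T.rowDec,
    fun _ _ => phiEntry_succ_row_lt T.colDistinct, sortedCol_perm a T.entry⟩

end
end

section
/- Every weak composition b with b ≥ a in dominance order and flat(b) = flat(a) is obtainable from a by a sequence of left swaps in which each swap exchanges a nonzero entry with a zero entry to its left; consequently b ∈ lswap(a). -/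
open MvPolynomial
open scoped Classical

noncomputable section

/-- A left swap exchanging a zero entry with a nonzero entry to its right
(i.e. moving a nonzero entry leftward past a zero). -/
def ZSwap {n : ℕ} (b c : Fin n → ℕ) : Prop :=
  ∃ i j : Fin n, i < j ∧ b i = 0 ∧ b j ≠ 0 ∧
    c = Function.update (Function.update b i (b j)) j (b i)

/-! Induct on the length, comparing first entries. If they agree, recurse on the tails.
Otherwise dominance at the first position and equality of flattenings force `a` to start with `0`
and `b` to start with the first nonzero entry `c` of `a`. Zero swaps carry `c` to the front of `a`;
the tail left behind has the flattening of `b`'s tail, and its partial sums are `0` before the old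
position of `c` and those of `a`'s tail less `c` after it, so it is still dominated by `b`'s tail. -/

section

variable {n : ℕ}

theorem psum_cons_succ (x : ℕ) (a : Fin n → ℕ) (k : ℕ) :
    psum (Fin.cons x a : Fin (n + 1) → ℕ) (k + 1) = x + psum a k := by
  simp [_root_.psum, Finset.sum_filter, Fin.sum_univ_succ]

theorem flat_cons (x : ℕ) (a : Fin n → ℕ) :
    flat (Fin.cons x a : Fin (n + 1) → ℕ) = if x = 0 then flat a else x :: flat a := by
  by_cases hx : x = 0 <;> simp [flat, List.ofFn_succ, hx]

theorem ne_zero_of_mem_flat {a : Fin n → ℕ} {x : ℕ} (h : x ∈ flat a) : x ≠ 0 := by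
  simpa using (List.mem_filter.mp h).2

theorem dom_cons_iff {x y : ℕ} {a b : Fin n → ℕ} :
    Dom (Fin.cons x a : Fin (n + 1) → ℕ) (Fin.cons y b) ↔ ∀ k, x + psum a k ≤ y + psum b k := by
  refine ⟨fun h k => by simpa only [psum_cons_succ] using h (k + 1), fun h k => ?_⟩
  cases k with
  | zero => simp [_root_.psum]
  | succ k => simpa only [psum_cons_succ] using h k

theorem ZSwap.cons {a b : Fin n → ℕ} (x : ℕ) (h : ZSwap a b) :
    ZSwap (Fin.cons x a : Fin (n + 1) → ℕ) (Fin.cons x b) := by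
  obtain ⟨i, j, hij, hi, hj, rfl⟩ := h
  exact ⟨i.succ, j.succ, Fin.succ_lt_succ_iff.mpr hij, hi, hj, by simp [Fin.cons_update]⟩

theorem ZSwap.lSwap {a b : Fin n → ℕ} (h : ZSwap a b) : LSwap a b := by
  obtain ⟨i, j, hij, hi, -, rfl⟩ := h
  exact ⟨i, j, hij, by simp [hi], rfl⟩

theorem reflTransGen_zSwap_cons {a b : Fin n → ℕ} (x : ℕ)
    (h : Relation.ReflTransGen ZSwap a b) :
    Relation.ReflTransGen ZSwap (Fin.cons x a : Fin (n + 1) → ℕ) (Fin.cons x b) := by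
  induction h with
  | refl => rfl
  | tail _ hstep ih => exact ih.tail (hstep.cons x)

theorem zSwap_cons_zero_cons {c : ℕ} (hc : c ≠ 0) (a : Fin n → ℕ) :
    ZSwap (Fin.cons 0 (Fin.cons c a : Fin (n + 1) → ℕ) : Fin (n + 2) → ℕ)
      (Fin.cons c (Fin.cons 0 a : Fin (n + 1) → ℕ)) := by
  refine ⟨0, 1, Fin.zero_lt_one, rfl, hc, ?_⟩
  ext i
  refine Fin.cases ?_ (Fin.cases ?_ fun i => ?_) i <;> simp [Fin.succ_succ_ne_one]

theorem exists_reflTransGen_zSwap_cons_zero {c : ℕ} {l : List ℕ} :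
    ∀ {n : ℕ} (a : Fin n → ℕ), flat a = c :: l →
      ∃ a' : Fin n → ℕ, Relation.ReflTransGen ZSwap (Fin.cons 0 a : Fin (n + 1) → ℕ)
          (Fin.cons c a') ∧ flat a' = l ∧ ∀ k, psum a' k = 0 ∨ psum a k = c + psum a' k
  | 0, a, h => by simp [flat] at h
  | n + 1, a, h => by
    obtain ⟨x, a, rfl⟩ : ∃ x a₁, a = Fin.cons x a₁ := ⟨_, _, (Fin.cons_self_tail a).symm⟩
    rw [flat_cons] at h
    split_ifs at h with hx
    · subst hx
      obtain ⟨a', hpath, hflat, hpsum⟩ := exists_reflTransGen_zSwap_cons_zero a h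
      refine ⟨Fin.cons 0 a', ?_, by rw [flat_cons, if_pos rfl, hflat], ?_⟩
      · have hc : c ≠ 0 := ne_zero_of_mem_flat (h ▸ List.mem_cons_self)
        exact (reflTransGen_zSwap_cons 0 hpath).tail (zSwap_cons_zero_cons hc a')
      · rintro (_ | k)
        · simp [_root_.psum]
        · simpa only [psum_cons_succ, zero_add] using hpsum k
    · obtain ⟨rfl, rfl⟩ := List.cons_eq_cons.mp h
      refine ⟨Fin.cons 0 a, .single (zSwap_cons_zero_cons hx a), by simp [flat_cons], ?_⟩
      rintro (_ | k)
      · simp [_root_.psum]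
      · simp only [psum_cons_succ, zero_add, or_true]

theorem reflTransGen_zSwap_of_dom :
    ∀ {n : ℕ} {a b : Fin n → ℕ}, Dom a b → flat a = flat b → Relation.ReflTransGen ZSwap a b
  | 0, a, b, _, _ => by rw [Subsingleton.elim a b]
  | n + 1, a, b, hd, hf => by
    obtain ⟨x, a, rfl⟩ : ∃ x a₁, a = Fin.cons x a₁ := ⟨_, _, (Fin.cons_self_tail a).symm⟩
    obtain ⟨y, b, rfl⟩ : ∃ y b₁, b = Fin.cons y b₁ := ⟨_, _, (Fin.cons_self_tail b).symm⟩
    rw [dom_cons_iff] at hd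
    rw [flat_cons, flat_cons] at hf
    obtain rfl | hxy := eq_or_ne x y
    · have hdom : Dom a b := fun k => Nat.add_le_add_iff_left.mp (hd k)
      have hflat : flat a = flat b := by
        split_ifs at hf
        exacts [hf, List.cons_injective hf]
      exact reflTransGen_zSwap_cons x (reflTransGen_zSwap_of_dom hdom hflat)
    · have hy : y ≠ 0 := by
        have hle : x ≤ y := by simpa [_root_.psum] using hd 0
        omega
      obtain rfl : x = 0 := by
        by_contra hx
        simp only [if_neg hx, if_neg hy, List.cons.injEq] at hf
        exact hxy hf.1
      rw [if_pos rfl, if_neg hy] at hf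
      obtain ⟨a', hpath, hflat, hpsum⟩ := exists_reflTransGen_zSwap_cons_zero a hf
      have hdom : Dom a' b := fun k => (hpsum k).elim (fun h => h ▸ Nat.zero_le _) fun h => by
        have := hd k
        omega
      exact hpath.trans (reflTransGen_zSwap_cons y (reflTransGen_zSwap_of_dom hdom hflat))

end

/-- every weak composition `b ≥ a` with `flat(b) = flat(a)` is
obtainable from `a` by a sequence of left swaps each of which exchanges a
nonzero entry with a zero entry to its left; consequently `b ∈ lswap(a)`. -/
theorem dominating_same_flat_mem_lswap {n : ℕ} (a b : Fin n → ℕ)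
    (hd : Dom a b) (hf : flat b = flat a) :
    Relation.ReflTransGen ZSwap a b ∧ Relation.ReflTransGen LSwap a b := by
  have hz := reflTransGen_zSwap_of_dom hd hf.symm
  exact ⟨hz, Relation.ReflTransGen.mono (fun _ _ => ZSwap.lSwap) _ _ hz⟩
end
end
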